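/- Let Φ ∈ ℚ[[x,s]] be the unique formal power series with Φ = exp(x + sΦ), and let Ψ₁ := −(1/2)·log(1 − sΦ). Suppose Ψ₂ ∈ ℚ[[x,s]] satisfies ∂Ψ₂/∂s = (1/2)·( ∂²Ψ₁/∂x² + 2Φ·∂Ψ₂/∂x + (∂Ψ₁/∂x)² ) with initial condition Ψ₂|_{s=0} = 0. Then Ψ₂ = Φ^{−1}·( (5/24)·Y³ + (1/8)·Y² ), where Y := sΦ·(1 − sΦ)^{−1}. (Here Φ and 1 − sΦ are units of ℚ[[x,s]] since Φ has constant coefficient 1.) -/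

import Mathlib

/-- Formal partial derivative `∂f/∂x_i` of a multivariate formal power series. -/
noncomputable def pd {σ : Type*} (R : Type*) [CommSemiring R]
    (i : σ) (f : MvPowerSeries σ R) : MvPowerSeries σ R :=
  fun m => (((m i) + 1 : ℕ) : R) * MvPowerSeries.coeff (R := R) (m + Finsupp.single i 1) f

/-- Total degree of a monomial. -/
def mdeg {σ : Type*} (m : σ →₀ ℕ) : ℕ := m.sum fun _ e => e

/-- `exp f = Σ_{k≥0} f^k/k!` for `f` with zero constant coefficient, computed
coefficientwise: since `f^k` has order `≥ k`, only `k ≤ deg m` contribute to the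
coefficient at a monomial `m`. -/
noncomputable def expS {σ R : Type*} [CommRing R] [Algebra ℚ R]
    (f : MvPowerSeries σ R) : MvPowerSeries σ R :=
  fun m => MvPowerSeries.coeff (R := R) m
    (∑ k ∈ Finset.range (mdeg m + 1), ((k.factorial : ℚ)⁻¹) • f ^ k)

/-- `log(1 − u) = −Σ_{k≥1} u^k/k` for `u` with zero constant coefficient, computed
coefficientwise: since `u^k` has order `≥ k`, only `k ≤ deg m` contribute. -/
noncomputable def logOneSubS {σ R : Type*} [CommRing R] [Algebra ℚ R]
    (u : MvPowerSeries σ R) : MvPowerSeries σ R :=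
  fun m => MvPowerSeries.coeff (R := R) m
    (- ∑ k ∈ Finset.Icc 1 (mdeg m), ((k : ℚ)⁻¹) • u ^ k)

/-- The genus-one counting series `Ψ₁ = −½·log(1 − sΦ)`. -/
noncomputable def psiOneComb (Φ : MvPowerSeries (Fin 2) ℚ) : MvPowerSeries (Fin 2) ℚ :=
  -((2 : ℚ)⁻¹) • logOneSubS (MvPowerSeries.X 1 * Φ)

/-- `Y := sΦ·(1 − sΦ)⁻¹`. -/
noncomputable def yComb (Φ : MvPowerSeries (Fin 2) ℚ) : MvPowerSeries (Fin 2) ℚ :=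
  MvPowerSeries.X 1 * Φ * (1 - MvPowerSeries.X 1 * Φ)⁻¹

/-!
Along the characteristic derivation `L = ∂ₛ − Φ ∂ₓ` the equation for `Ψ₂` reads
`L Ψ₂ = ½ (∂ₓ²Ψ₁ + (∂ₓΨ₁)²)`. Differentiating `Φ = exp(x + sΦ)` gives `L Φ = 0` and
`∂ₓΦ = Φ V` with `V = (1 − sΦ)⁻¹`, hence `L Y = Φ V²` and `L (Φ⁻¹ P(Y)) = P'(Y) V²` for every
polynomial `P`. Since `∂ₓΨ₁ = ½ sΦ V²`, the right-hand side equals `(¼ Y + ⅝ Y²) V²`, which is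
`P'(Y) V²` for `P = (5/24) Y³ + (1/8) Y²`. So the difference of `Ψ₂` and `Φ⁻¹ P(Y)` is killed by
`L` and vanishes at `s = 0`, and comparing coefficients in increasing powers of `s` shows that it
is zero. The chain rules for `exp` and `log` are proved on partial sums, which agree with the
series up to any given degree.
-/

open Finset Finsupp

namespace MvPowerSeries

variable {σ R : Type*}

theorem pd_eq_pderiv [CommSemiring R] (i : σ) : pd R i = pderiv R i := by
  funext f
  ext d
  change ((d i + 1 : ℕ) : R) * _ = _
  rw [coeff_pderiv, mul_comm, Nat.cast_succ]

section Semiring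

variable [Semiring R]

theorem coeff_mul_eq_zero_of_degree_lt_order {f g : MvPowerSeries σ R} {d : σ →₀ ℕ}
    (h : (d.degree : ℕ∞) < g.order) : coeff d (f * g) = 0 :=
  coeff_of_lt_order <| h.trans_le <| le_add_self.trans le_order_mul

theorem coeff_pow_eq_zero_of_degree_lt {f : MvPowerSeries σ R} (hf : constantCoeff f = 0)
    {d : σ →₀ ℕ} {n : ℕ} (h : d.degree < n) : coeff d (f ^ n) = 0 :=
  coeff_of_lt_order <| (Nat.cast_lt.mpr h).trans_le (le_order_pow_of_constantCoeff_eq_zero n hf)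

theorem coeff_eq_zero_of_X_dvd {i : σ} {f : MvPowerSeries σ R} (hf : X i ∣ f) {d : σ →₀ ℕ}
    (hd : d i = 0) : coeff d f = 0 := by
  classical
  obtain ⟨g, rfl⟩ := hf
  rw [X, coeff_monomial_mul, if_neg]
  simp [single_le_iff, hd]

end Semiring

theorem eq_zero_of_pderiv_eq_mul_pderiv [CommSemiring R] [IsAddTorsionFree R] {i j : σ}
    (hij : i ≠ j) {f g : MvPowerSeries σ R} (h : pderiv R i f = g * pderiv R j f)
    (h₀ : ∀ d : σ →₀ ℕ, d i = 0 → coeff d f = 0) : f = 0 := by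
  classical
  suffices ∀ n, ∀ d : σ →₀ ℕ, d i ≤ n → coeff d f = 0 from ext fun d => this _ d le_rfl
  intro n
  induction n with
  | zero => exact fun d hd => h₀ d (Nat.le_zero.mp hd)
  | succ n ih =>
    intro d hd
    rcases Nat.eq_zero_or_pos (d i) with hdi | hdi
    · exact h₀ d hdi
    obtain ⟨e, rfl⟩ : ∃ e, d = e + single i 1 :=
      ⟨d - single i 1, (tsub_add_cancel_of_le (single_le_iff.mpr hdi)).symm⟩
    have hei : e i ≤ n := by simpa using hd
    -- only coefficients of `f` with a smaller exponent of `i` enter the right-hand side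
    have hrhs : coeff e (g * pderiv R j f) = 0 := by
      rw [coeff_mul]
      refine sum_eq_zero fun pq hpq => ?_
      have hq : pq.2 i ≤ n := by
        have := congr($(mem_antidiagonal.mp hpq) i)
        simp only [Finsupp.add_apply] at this
        omega
      rw [coeff_pderiv, ih _ (by simpa [single_apply, hij.symm] using hq), zero_mul, mul_zero]
    have := congr(coeff e $h)
    rw [hrhs, coeff_pderiv, ← Nat.cast_succ, mul_comm, ← nsmul_eq_mul] at this
    exact nsmul_right_injective (Nat.succ_ne_zero _) (this.trans (smul_zero _).symm)

section CommRing

variable [CommRing R] [Algebra ℚ R]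

/-- `∑ₖ a k • f ^ k`, with the coefficient at `d` read off the partial sum up to `k = deg d`:
this is the intended series when `constantCoeff f = 0`. -/
noncomputable def evalPowerSeries (a : ℕ → ℚ) (f : MvPowerSeries σ R) : MvPowerSeries σ R :=
  fun d => coeff d (∑ k ∈ range (d.degree + 1), a k • f ^ k)

variable {a : ℕ → ℚ} {f : MvPowerSeries σ R}

theorem coeff_evalPowerSeries (hf : constantCoeff f = 0) {d : σ →₀ ℕ} {N : ℕ}
    (h : d.degree < N) :
    coeff d (evalPowerSeries a f) = coeff d (∑ k ∈ range N, a k • f ^ k) := by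
  change coeff d (∑ k ∈ range (d.degree + 1), a k • f ^ k) = _
  rw [map_sum, map_sum]
  refine sum_subset (range_subset_range.mpr h) fun k _ hk => ?_
  rw [map_rat_smul, coeff_pow_eq_zero_of_degree_lt hf (by simpa using hk), smul_zero]

theorem le_order_evalPowerSeries_sub (hf : constantCoeff f = 0) (N : ℕ) :
    (N : ℕ∞) ≤ (evalPowerSeries a f - ∑ k ∈ range N, a k • f ^ k).order :=
  nat_le_order fun d hd => by rw [map_sub, coeff_evalPowerSeries hf hd, sub_self]

theorem coeff_mul_evalPowerSeries (hf : constantCoeff f = 0) (g : MvPowerSeries σ R)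
    (d : σ →₀ ℕ) :
    coeff d (g * evalPowerSeries a f) = coeff d (g * ∑ k ∈ range (d.degree + 1), a k • f ^ k) := by
  rw [← sub_eq_zero, ← map_sub, ← mul_sub]
  exact coeff_mul_eq_zero_of_degree_lt_order <|
    (Nat.cast_lt.mpr d.degree.lt_succ_self).trans_le (le_order_evalPowerSeries_sub hf _)

theorem pderiv_sum_range_smul_pow (i : σ) (a : ℕ → ℚ) (f : MvPowerSeries σ R) (N : ℕ) :
    pderiv R i (∑ k ∈ range (N + 1), a k • f ^ k)
      = pderiv R i f * ∑ k ∈ range N, ((k + 1) * a (k + 1)) • f ^ k := by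
  rw [map_sum, sum_range_succ', Finset.mul_sum]
  simp only [map_rat_smul, Derivation.leibniz_pow, pow_zero, Derivation.map_one_eq_zero,
    smul_zero, add_zero, add_tsub_cancel_right, smul_eq_mul, mul_smul, ← Nat.cast_smul_eq_nsmul ℚ]
  refine sum_congr rfl fun k _ => ?_
  rw [smul_smul, mul_smul_comm, mul_comm (pderiv R i f), Nat.cast_succ, mul_comm (a (k + 1)),
    smul_mul_assoc, smul_smul]

theorem pderiv_evalPowerSeries (i : σ) (hf : constantCoeff f = 0) :
    pderiv R i (evalPowerSeries a f)
      = pderiv R i f * evalPowerSeries (fun k => (k + 1) * a (k + 1)) f := by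
  ext d
  rw [coeff_mul_evalPowerSeries hf, ← pderiv_sum_range_smul_pow, coeff_pderiv, coeff_pderiv,
    coeff_evalPowerSeries hf (by simp : (d + single i 1).degree < d.degree + 2)]

theorem evalPowerSeries_neg : evalPowerSeries (-a) f = -evalPowerSeries a f := by
  ext d
  change coeff d (∑ k ∈ range (d.degree + 1), (-a) k • f ^ k)
    = -coeff d (∑ k ∈ range (d.degree + 1), a k • f ^ k)
  simp [neg_smul]

theorem one_sub_mul_evalPowerSeries_one (hf : constantCoeff f = 0) :
    (1 - f) * evalPowerSeries 1 f = 1 := by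
  ext d
  rw [coeff_mul_evalPowerSeries hf]
  simp only [Pi.one_apply, one_smul]
  rw [mul_neg_geom_sum, map_sub, coeff_pow_eq_zero_of_degree_lt hf d.degree.lt_succ_self, sub_zero]

theorem constantCoeff_expS : constantCoeff (expS f) = 1 := by
  rw [← coeff_zero_eq_constantCoeff_apply]
  change coeff 0 (∑ k ∈ range (degree (0 : σ →₀ ℕ) + 1), ((k.factorial : ℚ)⁻¹) • f ^ k) = 1
  simp

theorem expS_eq_evalPowerSeries : expS f = evalPowerSeries (fun k => (k.factorial : ℚ)⁻¹) f :=
  rfl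

theorem pderiv_expS (i : σ) (hf : constantCoeff f = 0) :
    pderiv R i (expS f) = pderiv R i f * expS f := by
  rw [expS_eq_evalPowerSeries, pderiv_evalPowerSeries i hf]
  congr 2
  funext k
  rw [Nat.factorial_succ]
  push_cast
  field_simp

theorem logOneSubS_eq_evalPowerSeries : logOneSubS f = evalPowerSeries (fun k => -(k : ℚ)⁻¹) f := by
  ext d
  change coeff d (-∑ k ∈ Icc 1 d.degree, _) = coeff d (∑ k ∈ range (d.degree + 1), _)
  rw [range_eq_Ico, sum_eq_sum_Ico_succ_bot (Nat.succ_pos _), zero_add, Nat.succ_eq_add_one,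
    Ico_add_one_right_eq_Icc]
  simp [neg_smul, sum_neg_distrib]

theorem one_sub_mul_pderiv_logOneSubS (i : σ) (hf : constantCoeff f = 0) :
    (1 - f) * pderiv R i (logOneSubS f) = -pderiv R i f := by
  have hcoeff : (fun k : ℕ => ((k : ℚ) + 1) * -((k + 1 : ℕ) : ℚ)⁻¹) = -1 := by
    funext k
    push_cast
    field_simp
    simp
  rw [logOneSubS_eq_evalPowerSeries, pderiv_evalPowerSeries i hf, hcoeff, evalPowerSeries_neg,
    mul_neg, mul_neg, mul_left_comm, one_sub_mul_evalPowerSeries_one hf, mul_one]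

end CommRing

end MvPowerSeries

theorem Derivation.leibniz_of_one_sub_mul_eq_one {R A : Type*} [CommRing R] [CommRing A]
    [Algebra R A] (D : Derivation R A A) {u v : A} (h : (1 - u) * v = 1) : D v = v ^ 2 * D u := by
  rw [D.leibniz_of_mul_eq_one ((mul_comm _ _).trans h), map_sub, D.map_one_eq_zero, smul_eq_mul]
  ring

open MvPowerSeries

noncomputable def charDeriv (Φ : MvPowerSeries (Fin 2) ℚ) :
    Derivation ℚ (MvPowerSeries (Fin 2) ℚ) (MvPowerSeries (Fin 2) ℚ) :=
  pderiv ℚ 1 - Φ • pderiv ℚ 0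

noncomputable def psiTwoComb (Φ : MvPowerSeries (Fin 2) ℚ) : MvPowerSeries (Fin 2) ℚ :=
  Φ⁻¹ * (C (5 / 24) * yComb Φ ^ 3 + C (1 / 8) * yComb Φ ^ 2)

theorem charDeriv_apply {Φ : MvPowerSeries (Fin 2) ℚ} (f : MvPowerSeries (Fin 2) ℚ) :
    charDeriv Φ f = pderiv ℚ 1 f - Φ * pderiv ℚ 0 f :=
  rfl

theorem charDeriv_C {Φ : MvPowerSeries (Fin 2) ℚ} (q : ℚ) : charDeriv Φ (C q) = 0 :=
  (charDeriv Φ).map_algebraMap q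

theorem X_one_dvd_psiTwoComb (Φ : MvPowerSeries (Fin 2) ℚ) : X 1 ∣ psiTwoComb Φ := by
  have hY : X 1 ∣ yComb Φ := ⟨Φ * (1 - X 1 * Φ)⁻¹, mul_assoc _ _ _⟩
  exact ((dvd_pow hY three_ne_zero).mul_left _ |>.add
    ((dvd_pow hY two_ne_zero).mul_left _)).mul_left _

theorem one_sub_X_one_mul_mul_inv (Φ : MvPowerSeries (Fin 2) ℚ) :
    (1 - X 1 * Φ) * (1 - X 1 * Φ)⁻¹ = 1 :=
  MvPowerSeries.mul_inv_cancel _ (by simp)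

section GenusTwo

variable {Φ : MvPowerSeries (Fin 2) ℚ} (hΦ : Φ = expS (X 0 + X 1 * Φ))
include hΦ

theorem pderiv_of_eq_expS (i : Fin 2) : pderiv ℚ i Φ = pderiv ℚ i (X 0 + X 1 * Φ) * Φ := by
  conv_lhs => rw [hΦ]
  rw [pderiv_expS i (by simp), ← hΦ]

theorem mul_inv_cancel_of_eq_expS : Φ * Φ⁻¹ = 1 :=
  MvPowerSeries.mul_inv_cancel _ (by rw [hΦ, constantCoeff_expS]; exact one_ne_zero)

theorem pderiv_zero_of_eq_expS : pderiv ℚ 0 Φ = Φ * (1 - X 1 * Φ)⁻¹ := by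
  have h := pderiv_of_eq_expS hΦ 0
  simp only [map_add, Derivation.leibniz, pderiv_X_self, pderiv_X_of_ne Fin.zero_lt_one.ne',
    smul_eq_mul, mul_zero, add_zero] at h
  linear_combination (1 - X 1 * Φ)⁻¹ * h - pderiv ℚ 0 Φ * one_sub_X_one_mul_mul_inv Φ

theorem charDeriv_self_of_eq_expS : charDeriv Φ Φ = 0 := by
  have h₀ := pderiv_of_eq_expS hΦ 0
  have h₁ := pderiv_of_eq_expS hΦ 1
  simp only [map_add, Derivation.leibniz, pderiv_X_self, pderiv_X_of_ne Fin.zero_lt_one.ne',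
    pderiv_X_of_ne Fin.zero_lt_one.ne, smul_eq_mul, mul_zero, add_zero, zero_add, mul_one] at h₀ h₁
  rw [charDeriv_apply]
  linear_combination (1 - X 1 * Φ)⁻¹ * (h₁ - Φ * h₀)
    - (pderiv ℚ 1 Φ - Φ * pderiv ℚ 0 Φ) * one_sub_X_one_mul_mul_inv Φ

theorem charDeriv_X_one_mul : charDeriv Φ (X 1 * Φ) = Φ := by
  rw [Derivation.leibniz, charDeriv_self_of_eq_expS hΦ, charDeriv_apply, pderiv_X_self,
    pderiv_X_of_ne Fin.zero_lt_one.ne']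
  simp

theorem charDeriv_inv_one_sub :
    charDeriv Φ (1 - X 1 * Φ)⁻¹ = ((1 - X 1 * Φ)⁻¹) ^ 2 * Φ := by
  rw [(charDeriv Φ).leibniz_of_one_sub_mul_eq_one (one_sub_X_one_mul_mul_inv Φ),
    charDeriv_X_one_mul hΦ]

theorem charDeriv_inv : charDeriv Φ Φ⁻¹ = 0 := by
  rw [(charDeriv Φ).leibniz_of_mul_eq_one
    ((mul_comm _ _).trans (mul_inv_cancel_of_eq_expS hΦ)), charDeriv_self_of_eq_expS hΦ, smul_zero]

theorem charDeriv_yComb : charDeriv Φ (yComb Φ) = ((1 - X 1 * Φ)⁻¹) ^ 2 * Φ := by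
  rw [yComb, Derivation.leibniz, charDeriv_inv_one_sub hΦ, charDeriv_X_one_mul hΦ, smul_eq_mul,
    smul_eq_mul]
  linear_combination -(1 - X 1 * Φ)⁻¹ * Φ * one_sub_X_one_mul_mul_inv Φ

theorem charDeriv_psiTwoComb :
    charDeriv Φ (psiTwoComb Φ)
      = (3 * C (5 / 24) * yComb Φ ^ 2 + 2 * C (1 / 8) * yComb Φ) * ((1 - X 1 * Φ)⁻¹) ^ 2 := by
  simp only [psiTwoComb, Derivation.leibniz, Derivation.leibniz_pow, map_add, charDeriv_C,
    charDeriv_inv hΦ, charDeriv_yComb hΦ, smul_eq_mul, nsmul_eq_mul]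
  linear_combination (3 * C (5 / 24) * yComb Φ ^ 2 + 2 * C (1 / 8) * yComb Φ)
    * ((1 - X 1 * Φ)⁻¹) ^ 2 * mul_inv_cancel_of_eq_expS hΦ

theorem pderiv_zero_X_one_mul : pderiv ℚ 0 (X 1 * Φ) = X 1 * Φ * (1 - X 1 * Φ)⁻¹ := by
  rw [Derivation.leibniz, pderiv_zero_of_eq_expS hΦ, pderiv_X_of_ne Fin.zero_lt_one.ne']
  simp [mul_assoc]

theorem pderiv_zero_inv_one_sub :
    pderiv ℚ 0 (1 - X 1 * Φ)⁻¹ = X 1 * Φ * ((1 - X 1 * Φ)⁻¹) ^ 3 := by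
  rw [(pderiv ℚ 0).leibniz_of_one_sub_mul_eq_one (one_sub_X_one_mul_mul_inv Φ),
    pderiv_zero_X_one_mul hΦ]
  ring

theorem pderiv_zero_psiOneComb :
    pderiv ℚ 0 (psiOneComb Φ) = (2⁻¹ : ℚ) • (X 1 * Φ * ((1 - X 1 * Φ)⁻¹) ^ 2) := by
  have h := one_sub_mul_pderiv_logOneSubS 0 (f := X 1 * Φ) (by simp)
  rw [pderiv_zero_X_one_mul hΦ] at h
  have hlog : pderiv ℚ 0 (logOneSubS (X 1 * Φ)) = -(X 1 * Φ * ((1 - X 1 * Φ)⁻¹) ^ 2) := by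
    linear_combination (1 - X 1 * Φ)⁻¹ * h
      - pderiv ℚ 0 (logOneSubS (X 1 * Φ)) * one_sub_X_one_mul_mul_inv Φ
  rw [psiOneComb, map_rat_smul, hlog, smul_neg, neg_smul, neg_neg]

theorem pderiv_zero_pderiv_zero_psiOneComb :
    pderiv ℚ 0 (pderiv ℚ 0 (psiOneComb Φ)) = (2⁻¹ : ℚ) •
      (X 1 * Φ * ((1 - X 1 * Φ)⁻¹) ^ 3 + 2 * (X 1 * Φ) ^ 2 * ((1 - X 1 * Φ)⁻¹) ^ 4) := by
  rw [pderiv_zero_psiOneComb hΦ, map_rat_smul]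
  congr 1
  rw [Derivation.leibniz, Derivation.leibniz_pow, pderiv_zero_inv_one_sub hΦ,
    pderiv_zero_X_one_mul hΦ, smul_eq_mul, smul_eq_mul, nsmul_eq_mul]
  push_cast
  ring

theorem charDeriv_of_pde {Ψ₂ : MvPowerSeries (Fin 2) ℚ}
    (heq : pd ℚ 1 Ψ₂ = (2 : ℚ)⁻¹ •
      (pd ℚ 0 (pd ℚ 0 (psiOneComb Φ)) + 2 * Φ * pd ℚ 0 Ψ₂ + (pd ℚ 0 (psiOneComb Φ)) ^ 2)) :
    charDeriv Φ Ψ₂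
      = (3 * C (5 / 24) * yComb Φ ^ 2 + 2 * C (1 / 8) * yComb Φ) * ((1 - X 1 * Φ)⁻¹) ^ 2 := by
  simp only [pd_eq_pderiv] at heq
  rw [pderiv_zero_pderiv_zero_psiOneComb hΦ, pderiv_zero_psiOneComb hΦ] at heq
  simp only [smul_eq_C_mul] at heq
  -- all constants are integer multiples of `c = 1/24`
  set c : MvPowerSeries (Fin 2) ℚ := C (1 / 24)
  have hc : 24 * c = 1 := by rw [← map_ofNat C, ← map_mul]; norm_num
  have h₂ : C (2⁻¹ : ℚ) = 12 * c := by rw [← map_ofNat C, ← map_mul]; norm_num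
  have h₅ : C (5 / 24 : ℚ) = 5 * c := by rw [← map_ofNat C, ← map_mul]; norm_num
  have h₈ : C (1 / 8 : ℚ) = 3 * c := by rw [← map_ofNat C, ← map_mul]; norm_num
  rw [h₂] at heq
  rw [charDeriv_apply, heq, h₅, h₈, yComb]
  set u := X 1 * Φ
  set V := (1 - u)⁻¹
  linear_combination
    (Φ * pderiv ℚ 0 Ψ₂ + 6 * c * u * V ^ 3 + c * (72 * c + 15) * u ^ 2 * V ^ 4) * hc

end GenusTwo

/-- Let `Φ = exp(x + sΦ)` and `Ψ₁ = −½·log(1 − sΦ)`.  If `Ψ₂`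
satisfies `∂Ψ₂/∂s = ½(∂²Ψ₁/∂x² + 2Φ·∂Ψ₂/∂x + (∂Ψ₁/∂x)²)` with `Ψ₂|_{s=0} = 0`, then
`Ψ₂ = Φ⁻¹·((5/24)·Y³ + (1/8)·Y²)` where `Y = sΦ(1 − sΦ)⁻¹`. -/
theorem stmt15 (Φ Ψ₂ : MvPowerSeries (Fin 2) ℚ)
    (hΦ : Φ = expS (MvPowerSeries.X 0 + MvPowerSeries.X 1 * Φ))
    (heq : pd ℚ 1 Ψ₂ = (2 : ℚ)⁻¹ •
      (pd ℚ 0 (pd ℚ 0 (psiOneComb Φ)) + 2 * Φ * pd ℚ 0 Ψ₂ + (pd ℚ 0 (psiOneComb Φ)) ^ 2))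
    (hinit : ∀ n : ℕ, MvPowerSeries.coeff (R := ℚ) (Finsupp.single 0 n) Ψ₂ = 0) :
    Ψ₂ = Φ⁻¹ * (MvPowerSeries.C (σ := Fin 2) (R := ℚ) (5 / 24) * (yComb Φ) ^ 3 +
      MvPowerSeries.C (σ := Fin 2) (R := ℚ) (1 / 8) * (yComb Φ) ^ 2) := by
  show Ψ₂ = psiTwoComb Φ
  have hchar : charDeriv Φ (Ψ₂ - psiTwoComb Φ) = 0 := by
    rw [map_sub, sub_eq_zero, charDeriv_of_pde hΦ heq, charDeriv_psiTwoComb hΦ]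
  refine sub_eq_zero.mp <| eq_zero_of_pderiv_eq_mul_pderiv Fin.zero_lt_one.ne'
    (sub_eq_zero.mp hchar) fun d hd => ?_
  have hd' : d = Finsupp.single 0 (d 0) := by
    ext i
    fin_cases i <;> simp [hd]
  rw [map_sub, coeff_eq_zero_of_X_dvd (X_one_dvd_psiTwoComb Φ) hd, hd', hinit, sub_zero]
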